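/- arXiv:1808.02262 — 3 statements merged into one kernel-verified Lean document; each statement's English description precedes it below -/
import Mathlib

section
/- Let K be a real quadratic number field with K ≠ Q(√5). Then there does not exist any Z-form (of any rank) that is universal over the ring of integers O_K of K. -/
open scoped BigOperators
open NumberField Matrix

noncomputable section

/-- Evaluation of an integer coefficient matrix as a quadratic form over a commutative ring. -/
def evalForm {r : ℕ} {R : Type*} [CommRing R] (a : Matrix (Fin r) (Fin r) ℤ) (v : Fin r → R) : R :=
  ∑ i, ∑ j, (a i j : R) * v i * v j

/-- A `ℤ`-form: the associated real quadratic form is positive definite. -/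
def IsPosDefForm {r : ℕ} (a : Matrix (Fin r) (Fin r) ℤ) : Prop :=
  ∀ v : Fin r → ℝ, v ≠ 0 → 0 < evalForm a v

/-- A form is classical if all its off-diagonal coefficients are even. -/
def IsClassicalForm {r : ℕ} (a : Matrix (Fin r) (Fin r) ℤ) : Prop :=
  ∀ i j, i ≠ j → (2 : ℤ) ∣ (a i j + a j i)

/-- An element of a field is totally positive if every real embedding sends it to
a positive real number. -/
def TotallyPositive {K : Type*} [Field K] (x : K) : Prop :=
  ∀ σ : K →+* ℝ, 0 < σ x

/-- A `ℤ`-form is universal over the ring of integers of `K` if it represents every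
totally positive algebraic integer of `K`. -/
def IsUniversal (K : Type*) [Field K] [NumberField K] {r : ℕ}
    (a : Matrix (Fin r) (Fin r) ℤ) : Prop :=
  ∀ α : 𝓞 K, TotallyPositive (α : K) → ∃ v : Fin r → 𝓞 K, evalForm a v = (α : 𝓞 K)

/-- A number field is totally real if all its complex embeddings have real image. -/
def IsTotallyRealField (K : Type*) [Field K] : Prop :=
  ∀ φ : K →+* ℂ, ∀ x : K, (φ x).im = 0

/-- The codifferent of the ring of integers of `K`. -/
def Codifferent (K : Type*) [Field K] [NumberField K] : Set K :=
  {β : K | ∀ x : 𝓞 K, ∃ n : ℤ, Algebra.trace ℚ K (β * x) = n}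

/-- The rational Gram matrix of an integral quadratic form. -/
def gramQ {r : ℕ} (a : Matrix (Fin r) (Fin r) ℤ) : Matrix (Fin r) (Fin r) ℚ :=
  (2 : ℚ)⁻¹ • (a.map (Int.cast : ℤ → ℚ) + (a.map (Int.cast : ℤ → ℚ))ᵀ)

/-- The value of the quadratic form with Gram matrix `G` at the integer vector `v`. -/
def qVal {ι : Type*} [Fintype ι] (G : Matrix ι ι ℚ) (v : ι → ℤ) : ℚ :=
  dotProduct (fun i => (v i : ℚ)) (G.mulVec fun i => (v i : ℚ))

/-- The minimal vectors of the lattice with Gram matrix `G`. -/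
def MinVecs {ι : Type*} [Fintype ι] (G : Matrix ι ι ℚ) : Set (ι → ℤ) :=
  {v | v ≠ 0 ∧ ∀ w : ι → ℤ, w ≠ 0 → qVal G v ≤ qVal G w}

/-- `m` is the minimum of the lattice with Gram matrix `G`. -/
def IsLatMin {ι : Type*} [Fintype ι] (G : Matrix ι ι ℚ) (m : ℚ) : Prop :=
  (∃ v : ι → ℤ, v ≠ 0 ∧ qVal G v = m) ∧ ∀ v : ι → ℤ, v ≠ 0 → m ≤ qVal G v

/-- Positive definiteness of a rational Gram matrix. -/
def PosDefQMat {ι : Type*} [Fintype ι] (G : Matrix ι ι ℚ) : Prop :=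
  ∀ x : ι → ℚ, x ≠ 0 → 0 < dotProduct x (G.mulVec x)

/-- A lattice (given by its rational Gram matrix `G`) is of `E`-type if for every classical
positive definite `ℤ`-lattice all minimal vectors of the tensor product are split. -/
def IsEType {ι : Type*} [Fintype ι] (G : Matrix ι ι ℚ) : Prop :=
  ∀ (s : ℕ) (N : Matrix (Fin s) (Fin s) ℤ), N.IsSymm →
    PosDefQMat (N.map (Int.cast : ℤ → ℚ)) →
    ∀ z ∈ MinVecs (Matrix.kroneckerMap (· * ·) G (N.map (Int.cast : ℤ → ℚ))),
      ∃ v ∈ MinVecs G, ∃ u ∈ MinVecs (N.map (Int.cast : ℤ → ℚ)),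
        z = fun p => v p.1 * u p.2

/-- The Gram matrix of the twisted trace form `t_δ` with respect to an integral
basis `ω` of the ring of integers. -/
def traceFormMat (K : Type*) [Field K] [NumberField K] {d : ℕ}
    (ω : Module.Basis (Fin d) ℤ (𝓞 K)) (δ : K) : Matrix (Fin d) (Fin d) ℚ :=
  fun i j => Algebra.trace ℚ K (δ * (ω i : K) * (ω j : K))


/-!
Write `𝓞 K = ℤ ⊕ ℤω`. After replacing `ω` by `±ω - c` we may assume that `ω` is the smaller
root of its minimal polynomial `X² - tX - u` and lies in `(-1, 0)`; then `t ≥ 0`, `u ≥ 1`, and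
`1 + ω` is totally positive. Writing a representation `Q(x + yω) = 1 + ω` with `x, y ∈ ℤʳ` in
coordinates gives `Q(x) + u Q(y) = 1` and `B(x, y) + t Q(y) = 1`, where `B` is the polar form of
`Q`. Positivity of `Q` on `ℤʳ` forces `x = 0`, `Q(y) = 1`, hence `u = t = 1`, so `ω² = ω + 1` and
`(2ω - 1)² = 5`.
-/

theorem Irrational.eq_of_intCast_add_intCast_mul_eq {w : ℝ} (hw : Irrational w) {a b c d : ℤ}
    (h : (a : ℝ) + b * w = c + d * w) : a = c ∧ b = d := by
  obtain rfl | hbd := eq_or_ne b d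
  · exact ⟨by exact_mod_cast add_right_cancel h, rfl⟩
  · refine absurd ?_ ((hw.intCast_mul (sub_ne_zero.2 hbd)).ne_int (c - a))
    push_cast
    linear_combination h

/-- `2 * w < t` says that `w` is the smaller root of `X² - tX - u`. The other root `t - w` is
positive, as otherwise the integer `-u = w * (t - w)` would lie in `[0, 1)`. -/
theorem Irrational.nonneg_and_one_le_of_sq_eq {w : ℝ} (hw : Irrational w) {t u : ℤ}
    (hroot : w ^ 2 = u + t * w) (hsmall : 2 * w < t) (hlo : -1 < w) (hhi : w < 0) :
    0 ≤ t ∧ 1 ≤ u := by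
  have hu0 : u ≠ 0 := by
    rintro rfl
    have : w * (w - t) = 0 := by linear_combination hroot
    rcases mul_eq_zero.1 this with h | h
    · exact hhi.ne h
    · exact hw.ne_int t (sub_eq_zero.1 h)
  have hconj : 0 < t - w := by
    by_contra! h
    have h₁ : (-u : ℝ) < 1 := by nlinarith
    have h₂ : (0 : ℝ) ≤ -u := by nlinarith
    have : -u < 1 ∧ 0 ≤ -u := ⟨by exact_mod_cast h₁, by exact_mod_cast h₂⟩
    omega
  have htℝ : (-1 : ℝ) < t := by linarith
  have huℝ : (0 : ℝ) < u := by nlinarith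
  have : -1 < t ∧ 0 < u := ⟨by exact_mod_cast htℝ, by exact_mod_cast huℝ⟩
  omega

section evalForm

variable {r : ℕ} {a : Matrix (Fin r) (Fin r) ℤ}

@[simp]
theorem evalForm_zero {R : Type*} [CommRing R] : evalForm a (0 : Fin r → R) = 0 := by
  simp [evalForm]

theorem map_evalForm {R S : Type*} [CommRing R] [CommRing S] (f : R →+* S) (v : Fin r → R) :
    f (evalForm a v) = evalForm a (fun i ↦ f (v i)) := by
  simp [evalForm, map_sum]

theorem evalForm_intCast_add_intCast_mul {R : Type*} [CommRing R] (x y : Fin r → ℤ) {ω : R}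
    {t u : ℤ} (hroot : ω ^ 2 = u + t * ω) :
    evalForm a (fun i ↦ (x i : R) + y i * ω) =
      ((evalForm a x + u * evalForm a y : ℤ) : R) +
        ((evalForm a (x + y) - evalForm a x - evalForm a y + t * evalForm a y : ℤ) : R) * ω := by
  simp only [evalForm, Pi.add_apply]
  push_cast
  simp only [Finset.mul_sum, Finset.sum_mul, ← Finset.sum_sub_distrib, ← Finset.sum_add_distrib]
  refine Finset.sum_congr rfl fun i _ ↦ Finset.sum_congr rfl fun j _ ↦ ?_
  linear_combination ((a i j : R) * y i * y j) * hroot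

theorem IsPosDefForm.evalForm_pos (hpd : IsPosDefForm a) {z : Fin r → ℤ} (hz : z ≠ 0) :
    0 < evalForm a z := by
  have hzℝ : (fun i ↦ (z i : ℝ)) ≠ 0 := fun h ↦
    hz (funext fun i ↦ by simpa using congrFun h i)
  have hcast : ((evalForm a z : ℤ) : ℝ) = evalForm a (fun i ↦ (z i : ℝ)) :=
    map_evalForm (Int.castRingHom ℝ) z
  exact_mod_cast hcast ▸ hpd _ hzℝ

theorem IsPosDefForm.evalForm_nonneg (hpd : IsPosDefForm a) (z : Fin r → ℤ) :
    0 ≤ evalForm a z := by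
  obtain rfl | hz := eq_or_ne z 0
  · simp
  · exact (hpd.evalForm_pos hz).le

theorem IsPosDefForm.eq_one_and_eq_one_of_coeffs_eq_one {x y : Fin r → ℤ} {t u : ℤ}
    (hpd : IsPosDefForm a) (hu : 1 ≤ u) (h₁ : evalForm a x + u * evalForm a y = 1)
    (h₂ : evalForm a (x + y) - evalForm a x - evalForm a y + t * evalForm a y = 1) :
    u = 1 ∧ t = 1 := by
  have hy : y ≠ 0 := by
    rintro rfl
    simp at h₂
  have hQy := hpd.evalForm_pos hy
  have hQx : evalForm a x = 0 := by nlinarith [hpd.evalForm_nonneg x]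
  have hx : x = 0 := by
    by_contra hx
    exact (hpd.evalForm_pos hx).ne' hQx
  have hu1 : u = 1 :=
    Int.eq_one_of_mul_eq_one_right (by omega) (by linarith : u * evalForm a y = 1)
  subst hx hu1
  refine ⟨rfl, ?_⟩
  simp only [zero_add, evalForm_zero] at h₂
  nlinarith

end evalForm

theorem totallyPositive_one_add_of_sq_eq {K : Type*} [Field K] {ω : K} {t u : ℤ}
    (hroot : ω ^ 2 = u + t * ω) (σ : K →+* ℝ) (hlo : -1 < σ ω) (hhi : σ ω < 0) (ht : 0 ≤ t) :
    TotallyPositive (1 + ω) := by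
  intro τ
  have hσ : σ ω ^ 2 = u + t * σ ω := by simpa using congrArg σ hroot
  have hτ : τ ω ^ 2 = u + t * τ ω := by simpa using congrArg τ hroot
  have htℝ : (0 : ℝ) ≤ t := by exact_mod_cast ht
  have : (τ ω - σ ω) * (τ ω - (t - σ ω)) = 0 := by linear_combination hτ - hσ
  rw [map_add, map_one]
  rcases mul_eq_zero.1 this with h | h <;> linarith

namespace NumberField.RingOfIntegers

variable {K : Type*} [Field K] [NumberField K]

theorem exists_intCast_eq_of_coe_eq_ratCast {z : 𝓞 K} {q : ℚ} (h : (z : K) = q) :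
    ∃ k : ℤ, z = k := by
  obtain ⟨k, hk⟩ := (IsIntegral.exists_int_iff_exists_rat z.isIntegral_coe).1 ⟨q, h⟩
  exact ⟨k, RingOfIntegers.ext (by simpa using hk)⟩

/-- `ω` is a lift of a generator of the rank one free `ℤ`-module `𝓞 K ⧸ ℤ`, which is torsion
free because `ℤ` is integrally closed. -/
theorem exists_forall_eq_intCast_add_intCast_mul (hdeg : Module.finrank ℚ K = 2) :
    ∃ ω : 𝓞 K, (∀ q : ℚ, (ω : K) ≠ q) ∧ ∀ z : 𝓞 K, ∃ x y : ℤ, z = x + y * ω := by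
  set L := ℤ ∙ (1 : 𝓞 K)
  have mem_L : ∀ (z : 𝓞 K) (q : ℚ), (z : K) = q → z ∈ L := fun z q h ↦ by
    obtain ⟨k, rfl⟩ := exists_intCast_eq_of_coe_eq_ratCast h
    exact Submodule.mem_span_singleton.2 ⟨k, zsmul_one k⟩
  have : Module.IsTorsionFree ℤ (𝓞 K ⧸ L) := .of_smul_eq_zero fun n w hnw ↦ by
    obtain ⟨z, rfl⟩ := Submodule.Quotient.mk_surjective L w
    rw [← Submodule.Quotient.mk_smul, Submodule.Quotient.mk_eq_zero,
      Submodule.mem_span_singleton] at hnw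
    obtain ⟨m, hm⟩ := hnw
    refine or_iff_not_imp_left.2 fun hn ↦ (Submodule.Quotient.mk_eq_zero L).2 (mem_L z (m / n) ?_)
    have := congrArg ((↑) : 𝓞 K → K) hm
    push_cast at this ⊢
    field_simp
    simpa [mul_comm] using this.symm
  have hrank : Module.finrank ℤ (𝓞 K ⧸ L) = 1 := by
    have hL : Module.finrank ℤ L = 1 := by
      simpa using finrank_span_set_eq_card (R := ℤ) (LinearIndepOn.singleton (v := id)
        (one_ne_zero : (1 : 𝓞 K) ≠ 0))
    have := L.finrank_quotient_add_finrank
    rw [hL, RingOfIntegers.rank, hdeg] at this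
    omega
  obtain ⟨w, hw0, hw⟩ := finrank_eq_one_iff'.1 hrank
  obtain ⟨ω, rfl⟩ := Submodule.Quotient.mk_surjective L w
  refine ⟨ω, fun q h ↦ hw0 ((Submodule.Quotient.mk_eq_zero L).2 (mem_L ω q h)), fun z ↦ ?_⟩
  obtain ⟨y, hy⟩ := hw (Submodule.Quotient.mk z)
  rw [← Submodule.Quotient.mk_smul, eq_comm, ← sub_eq_zero, ← Submodule.Quotient.mk_sub,
    Submodule.Quotient.mk_eq_zero, Submodule.mem_span_singleton] at hy
  obtain ⟨x, hx⟩ := hy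
  exact ⟨x, y, by rw [zsmul_eq_mul, zsmul_eq_mul, mul_one] at hx; linear_combination -hx⟩

theorem exists_normalized_generator (σ : K →+* ℝ) (hdeg : Module.finrank ℚ K = 2) :
    ∃ (ω : 𝓞 K) (t u : ℤ), (∀ z : 𝓞 K, ∃ x y : ℤ, z = x + y * ω) ∧ Irrational (σ ω) ∧
      ω ^ 2 = u + t * ω ∧ -1 < σ ω ∧ σ ω < 0 ∧ 0 ≤ t ∧ 1 ≤ u := by
  obtain ⟨ω₀, hrat, hspan⟩ := exists_forall_eq_intCast_add_intCast_mul hdeg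
  have hirr₀ : Irrational (σ ω₀) := by
    rintro ⟨q, hq⟩
    exact hrat q (σ.injective (by simpa using hq.symm))
  obtain ⟨u₀, t₀, hroot₀⟩ := hspan (ω₀ ^ 2)
  obtain ⟨ε, hε, hsmall⟩ : ∃ ε : ℤ, ε * ε = 1 ∧ ε * (2 * σ ω₀ - t₀) < 0 := by
    have : 2 * σ ω₀ ≠ t₀ := fun h ↦ (hirr₀.intCast_mul two_ne_zero).ne_int t₀ (by simpa using h)
    rcases this.lt_or_gt with h | h
    · exact ⟨1, rfl, by push_cast; linarith⟩
    · exact ⟨-1, rfl, by push_cast; linarith⟩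
  have hεO : (ε : 𝓞 K) * ε = 1 := by exact_mod_cast hε
  set c := ⌈ε * σ ω₀⌉
  set t := ε * t₀ - 2 * c
  set u := u₀ + ε * t₀ * c - c ^ 2
  set ω : 𝓞 K := ε * ω₀ - c
  have hroot : ω ^ 2 = u + t * ω := by
    simp only [ω, t, u]
    push_cast
    linear_combination (ε : 𝓞 K) * ε * hroot₀ + (u₀ : 𝓞 K) * hεO
  have hσω : σ ω = ε * σ ω₀ - c := by simp [ω]
  have hirr : Irrational (σ ω) :=
    hσω ▸ (hirr₀.intCast_mul (by rintro rfl; simp at hε)).sub_intCast c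
  have hlo : -1 < σ ω := by linarith [Int.ceil_lt_add_one (ε * σ ω₀)]
  have hhi : σ ω < 0 := (hσω ▸ sub_nonpos.2 (Int.le_ceil _)).lt_of_ne hirr.ne_zero
  have hrootσ : σ ω ^ 2 = u + t * σ ω := by simpa using congrArg (fun z : 𝓞 K ↦ σ z) hroot
  obtain ⟨ht, hu⟩ := hirr.nonneg_and_one_le_of_sq_eq hrootσ
    (by simp only [t, hσω]; push_cast; linarith) hlo hhi
  refine ⟨ω, t, u, fun z ↦ ?_, hirr, hroot, hlo, hhi, ht, hu⟩
  obtain ⟨x, y, rfl⟩ := hspan z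
  exact ⟨x + y * ε * c, y * ε, by push_cast; linear_combination -(y : 𝓞 K) * ω₀ * hεO⟩

theorem eq_and_eq_of_intCast_add_intCast_mul_eq {σ : K →+* ℝ} {ω : 𝓞 K}
    (hirr : Irrational (σ ω)) {a b c d : ℤ} (h : (a : 𝓞 K) + b * ω = c + d * ω) : a = c ∧ b = d :=
  hirr.eq_of_intCast_add_intCast_mul_eq (by simpa using congrArg (fun z : 𝓞 K ↦ σ z) h)

theorem eq_one_of_evalForm_eq_one_add {r : ℕ} {a : Matrix (Fin r) (Fin r) ℤ}
    (hpd : IsPosDefForm a) (σ : K →+* ℝ) {ω : 𝓞 K} {t u : ℤ}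
    (hspan : ∀ z : 𝓞 K, ∃ x y : ℤ, z = x + y * ω) (hirr : Irrational (σ ω))
    (hroot : ω ^ 2 = u + t * ω) (hu : 1 ≤ u) {v : Fin r → 𝓞 K} (hv : evalForm a v = 1 + ω) :
    u = 1 ∧ t = 1 := by
  choose x y hxy using fun i ↦ hspan (v i)
  rw [funext hxy, evalForm_intCast_add_intCast_mul x y hroot] at hv
  obtain ⟨h₁, h₂⟩ :=
    eq_and_eq_of_intCast_add_intCast_mul_eq hirr (c := 1) (d := 1) (hv.trans (by simp))
  exact hpd.eq_one_and_eq_one_of_coeffs_eq_one hu h₁ h₂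

end NumberField.RingOfIntegers

open NumberField.RingOfIntegers in
/-- There is no `ℤ`-form (positive definite quadratic form with rational
integer coefficients, of any rank) that is universal over the ring of integers of a real
quadratic number field `K`, unless `K = ℚ(√5)`. -/
theorem no_universal_ZForm_over_real_quadratic_field
    (K : Type*) [Field K] [NumberField K]
    (hdeg : Module.finrank ℚ K = 2)
    (hreal : Nonempty (K →+* ℝ))
    (hK5 : ¬ ∃ x : K, x ^ 2 = 5) :
    ¬ ∃ (r : ℕ) (a : Matrix (Fin r) (Fin r) ℤ), IsPosDefForm a ∧ IsUniversal K a := by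
  rintro ⟨r, a, hpd, huniv⟩
  obtain ⟨σ⟩ := hreal
  obtain ⟨ω, t, u, hspan, hirr, hroot, hlo, hhi, ht, hu⟩ := exists_normalized_generator σ hdeg
  have hrootK : (ω : K) ^ 2 = u + t * ω := by simpa using congrArg ((↑) : 𝓞 K → K) hroot
  have htp : TotallyPositive ((1 + ω : 𝓞 K) : K) := by
    simpa using totallyPositive_one_add_of_sq_eq hrootK σ hlo hhi ht
  obtain ⟨v, hv⟩ := huniv (1 + ω) htp
  obtain ⟨rfl, rfl⟩ := eq_one_of_evalForm_eq_one_add hpd σ hspan hirr hroot hu hv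
  exact hK5 ⟨2 * ω - 1, by push_cast at hrootK; linear_combination 4 * hrootK⟩

end
end

section
/- Let O be an order in a totally real number field K of degree d. If β ∈ O^+ is totally positive with norm N(β) < 2^d, then β is indecomposable, i.e., β cannot be written as a sum of two totally positive elements of O. -/
open scoped BigOperators
open NumberField Matrix

noncomputable section

/-
Proof idea: in a totally real field the norm is the product of the real conjugates, so for
totally positive `a`, `b` the inequality `4 σ(a) σ(b) ≤ (σ(a) + σ(b))²` at every embedding `σ`
multiplies up to `4^d N(a) N(b) ≤ N(a + b)²`. Elements of an order are integral, so the norms of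
totally positive `a` and `b` are positive integers, hence at least `1`, and `N(a + b) ≥ 2^d`.
-/

theorem TotallyPositive.add {K : Type*} [Field K] {x y : K} (hx : TotallyPositive x)
    (hy : TotallyPositive y) : TotallyPositive (x + y) := fun σ => by
  simpa only [map_add] using add_pos (hx σ) (hy σ)

namespace IsTotallyRealField

variable {K : Type*} [Field K]

theorem isReal (htr : IsTotallyRealField K) (φ : K →+* ℂ) : ComplexEmbedding.IsReal φ :=
  ComplexEmbedding.isReal_iff.2 <| RingHom.ext fun x => Complex.conj_eq_iff_im.2 (htr φ x)

theorem re_pos_of_totallyPositive (htr : IsTotallyRealField K) {x : K} (hx : TotallyPositive x)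
    (φ : K →+* ℂ) : 0 < (φ x).re :=
  hx (htr.isReal φ).embedding

variable [NumberField K]

theorem norm_eq_prod_re (htr : IsTotallyRealField K) (x : K) :
    ((Algebra.norm ℚ x : ℚ) : ℝ) = ∏ φ : K →ₐ[ℚ] ℂ, (φ x).re := by
  have hreal : ∀ φ : K →ₐ[ℚ] ℂ, φ x = ((φ x).re : ℂ) := fun φ =>
    Complex.ext rfl (by simpa using htr φ x)
  apply Complex.ofReal_injective
  rw [Complex.ofReal_prod, ← Finset.prod_congr rfl fun φ _ => hreal φ,
    ← Algebra.norm_eq_prod_embeddings ℚ ℂ x]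
  rfl

theorem norm_pos_of_totallyPositive (htr : IsTotallyRealField K) {x : K}
    (hx : TotallyPositive x) : 0 < Algebra.norm ℚ x := by
  have h : (0 : ℝ) < ∏ φ : K →ₐ[ℚ] ℂ, (φ x).re :=
    Finset.prod_pos fun φ _ => htr.re_pos_of_totallyPositive hx φ
  rw [← htr.norm_eq_prod_re] at h
  exact_mod_cast h

theorem one_le_norm_of_totallyPositive (htr : IsTotallyRealField K) {x : K}
    (hint : IsIntegral ℤ x) (hx : TotallyPositive x) : 1 ≤ Algebra.norm ℚ x := by
  obtain ⟨n, hn⟩ := IsIntegrallyClosed.isIntegral_iff.mp (Algebra.isIntegral_norm ℚ hint)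
  have hpos := htr.norm_pos_of_totallyPositive hx
  rw [← hn, eq_intCast] at hpos ⊢
  exact Int.cast_one_le_of_pos (Int.cast_pos.mp hpos)

theorem four_pow_mul_norm_mul_norm_le_sq_norm_add (htr : IsTotallyRealField K) {a b : K}
    (ha : TotallyPositive a) (hb : TotallyPositive b) :
    4 ^ Module.finrank ℚ K * (Algebra.norm ℚ a * Algebra.norm ℚ b) ≤
      Algebra.norm ℚ (a + b) ^ 2 := by
  have h : ∏ φ : K →ₐ[ℚ] ℂ, 4 * ((φ a).re * (φ b).re) ≤ ∏ φ : K →ₐ[ℚ] ℂ, (φ (a + b)).re ^ 2 :=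
    Finset.prod_le_prod
      (fun φ _ => by
        have := htr.re_pos_of_totallyPositive ha φ
        have := htr.re_pos_of_totallyPositive hb φ
        positivity)
      (fun φ _ => by
        simpa only [map_add, Complex.add_re, mul_assoc] using four_mul_le_sq_add (φ a).re (φ b).re)
  rw [Finset.prod_mul_distrib, Finset.prod_const, Finset.card_univ, AlgHom.card,
    Finset.prod_mul_distrib, Finset.prod_pow, ← htr.norm_eq_prod_re, ← htr.norm_eq_prod_re,
    ← htr.norm_eq_prod_re] at h
  exact_mod_cast h

theorem two_pow_le_norm_add (htr : IsTotallyRealField K) {a b : K} (haint : IsIntegral ℤ a)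
    (hbint : IsIntegral ℤ b) (ha : TotallyPositive a) (hb : TotallyPositive b) :
    2 ^ Module.finrank ℚ K ≤ Algebra.norm ℚ (a + b) := by
  have hnorms : 1 ≤ Algebra.norm ℚ a * Algebra.norm ℚ b :=
    one_le_mul_of_one_le_of_one_le (htr.one_le_norm_of_totallyPositive haint ha)
      (htr.one_le_norm_of_totallyPositive hbint hb)
  refine le_of_pow_le_pow_left₀ two_ne_zero (htr.norm_pos_of_totallyPositive (ha.add hb)).le ?_
  calc ((2 : ℚ) ^ Module.finrank ℚ K) ^ 2 = 4 ^ Module.finrank ℚ K * 1 := by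
        rw [← pow_mul, mul_comm, pow_mul]; norm_num
    _ ≤ 4 ^ Module.finrank ℚ K * (Algebra.norm ℚ a * Algebra.norm ℚ b) := by gcongr
    _ ≤ Algebra.norm ℚ (a + b) ^ 2 := htr.four_pow_mul_norm_mul_norm_le_sq_norm_add ha hb

end IsTotallyRealField

theorem indecomposable_of_norm_lt_two_pow_degree_general
    (K : Type*) [Field K] [NumberField K]
    (htr : IsTotallyRealField K)
    (O : Subalgebra ℤ K)
    (hfg : (Subalgebra.toSubmodule O).FG)
    (β : K)
    (hnorm : Algebra.norm ℚ β < 2 ^ Module.finrank ℚ K) :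
    ¬ ∃ a b : K, a ∈ O ∧ b ∈ O ∧ TotallyPositive a ∧ TotallyPositive b ∧ β = a + b := by
  rintro ⟨a, b, haO, hbO, ha, hb, rfl⟩
  exact (htr.two_pow_le_norm_add (.of_mem_of_fg O hfg a haO) (.of_mem_of_fg O hfg b hbO) ha hb
    |>.not_gt hnorm)

/-- In an order `O` of a totally real number field `K` of degree `d`,
every totally positive `β ∈ O` with `N(β) < 2^d` is indecomposable: it is not a sum of
two totally positive elements of `O`. -/
theorem indecomposable_of_norm_lt_two_pow_degree
    (K : Type*) [Field K] [NumberField K]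
    (htr : IsTotallyRealField K)
    (O : Subalgebra ℤ K)
    (hfg : (Subalgebra.toSubmodule O).FG)
    (hfull : Submodule.span ℚ (O : Set K) = ⊤)
    (β : K) (hβO : β ∈ O) (hβpos : TotallyPositive β)
    (hnorm : Algebra.norm ℚ β < 2 ^ Module.finrank ℚ K) :
    ¬ ∃ a b : K, a ∈ O ∧ b ∈ O ∧ TotallyPositive a ∧ TotallyPositive b ∧ β = a + b :=
  indecomposable_of_norm_lt_two_pow_degree_general K htr O hfg β hnorm

end
end

section
/- Let Q₀ be a d-ary positive semidefinite quadratic form with integer coefficients. Then there exists a positive definite quadratic form Q with integer coefficients of rank m ≤ d such that Q represents Q₀ over Z, i.e., there is a matrix X ∈ Z^(m×d) with M_{Q₀} = Xᵀ M_Q X, where M_{Q₀} and M_Q are the Gram matrices. -/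
/-!
Write `S = a₀ + a₀ᵀ` for twice the Gram matrix of `Q₀`. Over `ℤ` the column space of `S` is a free
module of rank `m ≤ d`; choose a basis `S w₁, …, S wₘ` of it and let `X` hold the coordinates of the
columns of `S`, so that `S W X = S`. Since `S` is symmetric this gives `(WX)ᵀ S (WX) = S`, i.e. `Q₀`
is represented by `Q = Wᵀ a₀ W`. The form `Q` is positive semidefinite, and it is nondegenerate:
an integral vector `z` in its radical has `(Wz)ᵀ S (Wz) = 0`, hence `S W z = 0` by semidefiniteness,
hence `z = 0`. Nondegeneracy is a determinant condition, so it holds over `ℝ` as well, and a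
nondegenerate positive semidefinite form is positive definite.
-/

open scoped BigOperators
open NumberField Matrix

noncomputable section

/-- The columns of `T * W` form a basis of the column space of `T`, which is free of rank `≤ d`
over a PID; the columns of `X` are the coordinates of the columns of `T` in that basis. -/
theorem Matrix.exists_injective_mul_mul_eq_self {R : Type*} [CommRing R] [IsDomain R]
    [IsPrincipalIdealRing R] {n d : ℕ} (T : Matrix (Fin n) (Fin d) R) :
    ∃ m ≤ d, ∃ (W : Matrix (Fin d) (Fin m) R) (X : Matrix (Fin m) (Fin d) R),
      Function.Injective (T * W).mulVec ∧ T * W * X = T := by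
  classical
  obtain ⟨m, b⟩ := Submodule.basisOfPid (Pi.basisFun R (Fin n)) (LinearMap.range T.mulVecLin)
  choose w hw using fun i => (b i).2
  let φ := (Pi.basisFun R (Fin m)).constr R w
  have hφ : T.mulVecLin ∘ₗ φ = (LinearMap.range T.mulVecLin).subtype ∘ₗ b.equivFun.symm :=
    (Pi.basisFun R (Fin m)).ext fun i => by simp [φ, hw]
  refine ⟨m, by simpa using (Module.finrank_eq_card_basis b).symm.trans_le T.rank_le_width,
    LinearMap.toMatrix' φ,
    LinearMap.toMatrix' (b.equivFun.toLinearMap ∘ₗ T.mulVecLin.rangeRestrict), ?_, ?_⟩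
  · rw [← Matrix.coe_mulVecLin, Matrix.mulVecLin_mul, ← Matrix.toLin'_apply' (LinearMap.toMatrix' φ),
      Matrix.toLin'_toMatrix', hφ]
    exact Subtype.val_injective.comp b.equivFun.symm.injective
  · apply Matrix.toLin'.injective
    rw [Matrix.toLin'_mul, Matrix.toLin'_mul, Matrix.toLin'_toMatrix', Matrix.toLin'_toMatrix']
    simp only [Matrix.toLin'_apply']
    rw [hφ]
    exact LinearMap.ext fun x => by simp

theorem Matrix.transpose_mul_mul_eq_self {n α : Type*} [Fintype n] [CommSemiring α]
    {G P : Matrix n n α} (hG : Gᵀ = G) (hP : G * P = G) : Pᵀ * G * P = G := by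
  rw [Matrix.mul_assoc, hP]
  conv_lhs => rw [← hG, ← transpose_mul, hP, hG]

theorem Matrix.map_intCast_mul {R : Type*} [Ring R] {k l n : Type*} [Fintype l]
    (L : Matrix k l ℤ) (M : Matrix l n ℤ) :
    -- without both ascriptions `*` would elaborate to the `CStarMatrix` product
    (L * M).map (Int.cast : ℤ → R) =
      (L.map Int.cast : Matrix k l R) * (M.map Int.cast : Matrix l n R) :=
  Matrix.map_mul (f := Int.castRingHom R)

theorem Matrix.transpose_mul_mul_add_transpose {n k R : Type*} [Fintype n] [CommRing R]
    (a : Matrix n n R) (W : Matrix n k R) : Wᵀ * a * W + (Wᵀ * a * W)ᵀ = Wᵀ * (a + aᵀ) * W := by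
  simp only [transpose_mul, transpose_transpose, Matrix.mul_add, Matrix.add_mul, Matrix.mul_assoc]

variable {d m : ℕ}

theorem evalForm_eq_dotProduct_mulVec {R : Type*} [CommRing R] (a : Matrix (Fin d) (Fin d) ℤ)
    (v : Fin d → R) : evalForm a v = v ⬝ᵥ a.map (Int.cast : ℤ → R) *ᵥ v := by
  simp only [evalForm, dotProduct, mulVec, map_apply, Finset.mul_sum]
  exact Finset.sum_congr rfl fun i _ => Finset.sum_congr rfl fun j _ => by ring

theorem two_mul_evalForm {R : Type*} [CommRing R] (a : Matrix (Fin d) (Fin d) ℤ) (v : Fin d → R) :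
    2 * evalForm a v = v ⬝ᵥ (a + aᵀ).map (Int.cast : ℤ → R) *ᵥ v := by
  rw [Matrix.map_add _ Int.cast_add, transpose_map, add_mulVec, dotProduct_add,
    dotProduct_transpose_mulVec, evalForm_eq_dotProduct_mulVec, two_mul]

theorem gramQ_eq_smul (a : Matrix (Fin d) (Fin d) ℤ) :
    gramQ a = (2 : ℚ)⁻¹ • (a + aᵀ).map (Int.cast : ℤ → ℚ) := by
  rw [gramQ, Matrix.map_add _ Int.cast_add, transpose_map]

theorem gramQ_transpose (a : Matrix (Fin d) (Fin d) ℤ) : (gramQ a)ᵀ = gramQ a := by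
  rw [gramQ, transpose_smul, transpose_add, transpose_transpose, add_comm]

theorem gramQ_transpose_mul_mul (a : Matrix (Fin d) (Fin d) ℤ) (W : Matrix (Fin d) (Fin m) ℤ) :
    gramQ (Wᵀ * a * W) = (W.map (Int.cast : ℤ → ℚ))ᵀ * gramQ a * W.map (Int.cast : ℤ → ℚ) := by
  rw [gramQ_eq_smul, gramQ_eq_smul, transpose_mul_mul_add_transpose, map_intCast_mul,
    map_intCast_mul, transpose_map, Matrix.mul_smul, Matrix.smul_mul]

theorem posSemidef_map_add_transpose {a : Matrix (Fin d) (Fin d) ℤ}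
    (ha : ∀ v : Fin d → ℝ, 0 ≤ evalForm a v) :
    ((a + aᵀ).map (Int.cast : ℤ → ℝ)).PosSemidef := by
  refine .of_dotProduct_mulVec_nonneg ?_ fun v => ?_
  · rw [isHermitian_iff_isSymm]
    exact IsSymm.map (by rw [IsSymm, transpose_add, transpose_transpose, add_comm]) _
  · rw [star_trivial, ← two_mul_evalForm]
    exact mul_nonneg zero_le_two (ha v)

theorem det_transpose_mul_mul_ne_zero {S : Matrix (Fin d) (Fin d) ℤ}
    (hS : (S.map (Int.cast : ℤ → ℝ)).PosSemidef) {W : Matrix (Fin d) (Fin m) ℤ}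
    (hW : Function.Injective (S * W).mulVec) : (Wᵀ * S * W).det ≠ 0 := by
  intro hdet
  obtain ⟨z, hz, hz_ker⟩ := exists_mulVec_eq_zero_iff.mpr hdet
  set y := W *ᵥ z
  have hy : y ⬝ᵥ S *ᵥ y = 0 := by
    have : z ⬝ᵥ (Wᵀ * S * W) *ᵥ z = 0 := by rw [hz_ker, dotProduct_zero]
    rwa [Matrix.mul_assoc, ← mulVec_mulVec, ← mulVec_mulVec, dotProduct_mulVec,
      vecMul_transpose] at this
  have hSy_cast : S.map (Int.cast : ℤ → ℝ) *ᵥ (Int.cast ∘ y) = Int.cast ∘ (S *ᵥ y) :=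
    funext fun i => (RingHom.map_mulVec (Int.castRingHom ℝ) S y i).symm
  have hSy : S *ᵥ y = 0 := by
    have h := (hS.dotProduct_mulVec_zero_iff (Int.cast ∘ y)).mp <| by
      rw [star_trivial, hSy_cast]
      exact ((Int.castRingHom ℝ).map_dotProduct y (S *ᵥ y)).symm.trans (by rw [hy, map_zero])
    rw [hSy_cast] at h
    exact funext fun i => Int.cast_eq_zero.mp (congrFun h i)
  exact hz (hW (by rw [← mulVec_mulVec, hSy, mulVec_zero]))

theorem posDef_map_transpose_mul_mul {S : Matrix (Fin d) (Fin d) ℤ}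
    (hS : (S.map (Int.cast : ℤ → ℝ)).PosSemidef) {W : Matrix (Fin d) (Fin m) ℤ}
    (hW : Function.Injective (S * W).mulVec) :
    ((Wᵀ * S * W).map (Int.cast : ℤ → ℝ)).PosDef := by
  have hpsd := hS.conjTranspose_mul_mul_same (W.map (Int.cast : ℤ → ℝ))
  rw [conjTranspose_eq_transpose_of_trivial, ← transpose_map, ← map_intCast_mul,
    ← map_intCast_mul] at hpsd
  have hdet : ((Wᵀ * S * W).map (Int.cast : ℤ → ℝ)).det = (Wᵀ * S * W).det :=
    ((Int.castRingHom ℝ).map_det _).symm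
  rw [hpsd.posDef_iff_det_ne_zero, hdet, Int.cast_ne_zero]
  exact det_transpose_mul_mul_ne_zero hS hW

theorem isPosDefForm_transpose_mul_mul {a : Matrix (Fin d) (Fin d) ℤ}
    (ha : ((a + aᵀ).map (Int.cast : ℤ → ℝ)).PosSemidef) {W : Matrix (Fin d) (Fin m) ℤ}
    (hW : Function.Injective ((a + aᵀ) * W).mulVec) : IsPosDefForm (Wᵀ * a * W) := by
  intro v hv
  have := (posDef_map_transpose_mul_mul ha hW).dotProduct_mulVec_pos hv
  rw [star_trivial, ← transpose_mul_mul_add_transpose, ← two_mul_evalForm] at this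
  exact pos_of_mul_pos_right this zero_le_two

/-- Every `d`-ary positive semidefinite quadratic form `Q₀` with integer
coefficients is represented over `ℤ` by a positive definite integer quadratic form `Q` of
rank `m ≤ d`: there is `X ∈ ℤ^(m×d)` with `M_{Q₀} = Xᵀ M_Q X` (Gram matrices). -/
theorem posSemidef_form_represented_by_posDef_form
    (d : ℕ) (a₀ : Matrix (Fin d) (Fin d) ℤ)
    (hpsd : ∀ v : Fin d → ℝ, 0 ≤ evalForm a₀ v) :
    ∃ m : ℕ, m ≤ d ∧ ∃ a : Matrix (Fin m) (Fin m) ℤ, IsPosDefForm a ∧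
      ∃ X : Matrix (Fin m) (Fin d) ℤ,
        gramQ a₀ = (X.map (Int.cast : ℤ → ℚ))ᵀ * gramQ a * X.map (Int.cast : ℤ → ℚ) := by
  obtain ⟨m, hmd, W, X, hinj, hWX⟩ := (a₀ + a₀ᵀ).exists_injective_mul_mul_eq_self
  refine ⟨m, hmd, Wᵀ * a₀ * W,
    isPosDefForm_transpose_mul_mul (posSemidef_map_add_transpose hpsd) hinj, X, ?_⟩
  have hfix : gramQ a₀ * (W * X).map (Int.cast : ℤ → ℚ) = gramQ a₀ := by
    rw [gramQ_eq_smul, Matrix.smul_mul, ← map_intCast_mul, ← Matrix.mul_assoc, hWX]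
  calc gramQ a₀
      = ((W * X).map (Int.cast : ℤ → ℚ))ᵀ * gramQ a₀ * (W * X).map (Int.cast : ℤ → ℚ) :=
        (transpose_mul_mul_eq_self (gramQ_transpose a₀) hfix).symm
    _ = _ := by
        rw [gramQ_transpose_mul_mul, map_intCast_mul, transpose_mul]
        simp only [Matrix.mul_assoc]

end
end
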